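/- Let γ : A → B be a homomorphism of abelian groups and n a positive integer such that n·(ker γ) = 0 and n·(coker γ) = 0. If the maximal divisible subgroup A_div of A is torsion-free, then γ restricts to an isomorphism A_div ≅ B_div. -/
import Mathlib

def IsDivisibleSub {A : Type*} [AddCommGroup A] (D : AddSubgroup A) : Prop :=
  ∀ n : ℕ, 0 < n → ∀ d ∈ D, ∃ d' ∈ D, n • d' = d

def maxDiv (A : Type*) [AddCommGroup A] : AddSubgroup A :=
  sSup {D : AddSubgroup A | IsDivisibleSub D}

lemma isDivisibleSub_maxDiv (A : Type*) [AddCommGroup A] : IsDivisibleSub (maxDiv A) := by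
  intro k hk d hd
  rw [maxDiv, sSup_eq_iSup'] at hd
  refine AddSubgroup.iSup_induction (C := fun x => ∃ d' ∈ maxDiv A, k • d' = x) _ hd ?_ ?_ ?_
  · rintro ⟨D, hD⟩ x hx
    obtain ⟨d', hd', hkd⟩ := hD k hk x hx
    exact ⟨d', le_sSup hD hd', hkd⟩
  · exact ⟨0, (maxDiv A).zero_mem, smul_zero k⟩
  · rintro x y ⟨x', hx', hxk⟩ ⟨y', hy', hyk⟩
    exact ⟨x' + y', (maxDiv A).add_mem hx' hy', by rw [smul_add, hxk, hyk]⟩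

lemma le_maxDiv {A : Type*} [AddCommGroup A] {D : AddSubgroup A} (h : IsDivisibleSub D) :
    D ≤ maxDiv A := le_sSup h

theorem stmt14 {A B : Type*} [AddCommGroup A] [AddCommGroup B] (γ : A →+ B)
    (n : ℕ) (hn : 0 < n)
    (hker : ∀ x ∈ γ.ker, n • x = 0)
    (hcoker : ∀ y : B ⧸ γ.range, n • y = 0)
    (hud : ∀ x ∈ maxDiv A, ∀ m : ℕ, 0 < m → m • x = 0 → x = 0) :
    (maxDiv A).map γ = maxDiv B ∧ ∀ x ∈ maxDiv A, γ x = 0 → x = 0 := by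
  have hBdiv := isDivisibleSub_maxDiv B
  have hAdiv := isDivisibleSub_maxDiv A
  -- n • b ∈ range γ for all b
  have hrange : ∀ b : B, ∃ a : A, γ a = n • b := by
    intro b
    have := hcoker (QuotientAddGroup.mk b)
    rw [← QuotientAddGroup.mk_nsmul, QuotientAddGroup.eq_zero_iff] at this
    obtain ⟨a, ha⟩ := this
    exact ⟨a, ha⟩
  -- the subgroup D = n • γ⁻¹(maxDiv B)
  set D : AddSubgroup A := ((maxDiv B).comap γ).map (n • AddMonoidHom.id A) with hDdef
  have hmemD : ∀ x, x ∈ D ↔ ∃ a, γ a ∈ maxDiv B ∧ n • a = x := by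
    intro x
    simp [hDdef, AddSubgroup.mem_map, AddSubgroup.mem_comap]
  have hDdivis : IsDivisibleSub D := by
    intro m hm x hx
    obtain ⟨a, ha, hna⟩ := (hmemD x).1 hx
    obtain ⟨c, hc, hcm⟩ := hBdiv (m * n) (by positivity) (γ a) ha
    obtain ⟨a', ha'⟩ := hrange c
    have h1 : γ (m • a') = γ a := by
      rw [map_nsmul, ha', ← mul_smul, hcm]
    have h2 : n • (a - m • a') = 0 := hker _ (by simp [AddMonoidHom.mem_ker, h1])
    refine ⟨n • a', (hmemD _).2 ⟨a', ?_, rfl⟩, ?_⟩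
    · rw [ha']
      exact AddSubgroup.nsmul_mem _ hc n
    · have h3 : n • a = n • (m • a') := by
        rw [smul_sub] at h2
        exact sub_eq_zero.mp h2
      rw [smul_comm, ← h3, hna]
  have hDle : D ≤ maxDiv A := le_maxDiv hDdivis
  -- image of maxDiv A is divisible
  have himgdiv : IsDivisibleSub ((maxDiv A).map γ) := by
    intro m hm b hb
    obtain ⟨a, ha, rfl⟩ := hb
    obtain ⟨a', ha', hma⟩ := hAdiv m hm a ha
    exact ⟨γ a', ⟨a', ha', rfl⟩, by rw [← map_nsmul, hma]⟩
  constructor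
  · apply le_antisymm (le_maxDiv himgdiv)
    -- maxDiv B ≤ γ(D) ≤ γ(maxDiv A)
    intro y hy
    obtain ⟨c, hc, hcy⟩ := hBdiv (n * n) (by positivity) y hy
    obtain ⟨a, ha⟩ := hrange c
    have haB : γ a ∈ maxDiv B := by rw [ha]; exact AddSubgroup.nsmul_mem _ hc n
    refine ⟨n • a, hDle ((hmemD _).2 ⟨a, haB, rfl⟩), ?_⟩
    rw [map_nsmul, ha, ← mul_smul, hcy]
  · intro x hx hgx
    exact hud x hx n hn (hker x (by simpa [AddMonoidHom.mem_ker] using hgx))
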